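/- arXiv:2206.09787 — 2 statements merged into one kernel-verified Lean document; each statement's English description precedes it below -/
import Mathlib

section
/- The shifted geometric mean with shift a ≥ 0 of positive reals x₁,…,xₙ is at least their (unshifted) geometric mean. -/
/-!
The geometric mean is superadditive: dividing by the geometric mean of `x + y`, the two
geometric means of `x / (x + y)` and `y / (x + y)` are each bounded by their arithmetic means
(AM-GM), and these arithmetic means add up to `1`. For `y` the constant `a` the second
geometric mean is `a` itself.
-/

open Finset

namespace Real

variable {ι : Type*} (s : Finset ι) (w : ι → ℝ)

theorem prod_div_rpow {x y : ι → ℝ} (hx : ∀ i ∈ s, 0 ≤ x i) (hy : ∀ i ∈ s, 0 ≤ y i) :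
    ∏ i ∈ s, (x i / y i) ^ w i = (∏ i ∈ s, x i ^ w i) / ∏ i ∈ s, y i ^ w i := by
  rw [← prod_div_distrib]
  exact prod_congr rfl fun i hi => div_rpow (hx i hi) (hy i hi) _

theorem geom_mean_add_geom_mean_le_weighted (hw : ∀ i ∈ s, 0 ≤ w i) (hw' : ∑ i ∈ s, w i = 1)
    {x y : ι → ℝ} (hx : ∀ i ∈ s, 0 ≤ x i) (hy : ∀ i ∈ s, 0 ≤ y i)
    (hxy : ∀ i ∈ s, 0 < x i + y i) :
    ∏ i ∈ s, x i ^ w i + ∏ i ∈ s, y i ^ w i ≤ ∏ i ∈ s, (x i + y i) ^ w i := by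
  have hG : 0 < ∏ i ∈ s, (x i + y i) ^ w i :=
    prod_pos fun i hi => rpow_pos_of_pos (hxy i hi) _
  have hxz : ∀ i ∈ s, 0 ≤ x i / (x i + y i) := fun i hi => div_nonneg (hx i hi) (hxy i hi).le
  have hyz : ∀ i ∈ s, 0 ≤ y i / (x i + y i) := fun i hi => div_nonneg (hy i hi) (hxy i hi).le
  have hsum : ∑ i ∈ s, w i * (x i / (x i + y i)) + ∑ i ∈ s, w i * (y i / (x i + y i)) = 1 := by
    rw [← sum_add_distrib, ← hw']
    refine sum_congr rfl fun i hi => ?_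
    rw [← mul_add, ← add_div, div_self (hxy i hi).ne', mul_one]
  have hamgm := add_le_add (geom_mean_le_arith_mean_weighted s w _ hw hw' hxz)
    (geom_mean_le_arith_mean_weighted s w _ hw hw' hyz)
  rw [hsum, prod_div_rpow s w hx fun i hi => (hxy i hi).le,
    prod_div_rpow s w hy fun i hi => (hxy i hi).le, ← add_div, div_le_one hG] at hamgm
  exact hamgm

end Real

theorem shiftedGeomMean_ge_geomMean (n : ℕ) (hn : 0 < n)
    (x : Fin n → ℝ) (hx : ∀ i, 0 < x i) (a : ℝ) (ha : 0 ≤ a) :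
    (∏ i, x i) ^ ((1 : ℝ) / n) ≤ (∏ i, (x i + a)) ^ ((1 : ℝ) / n) - a := by
  have hw : ∀ i ∈ (univ : Finset (Fin n)), (0 : ℝ) ≤ 1 / n := fun _ _ => by positivity
  have hw' : ∑ _i : Fin n, (1 : ℝ) / n = 1 := by
    rw [sum_const, card_univ, Fintype.card_fin, nsmul_eq_mul, mul_one_div_cancel]
    exact_mod_cast hn.ne'
  have hxa : ∀ i, 0 < x i + a := fun i => add_pos_of_pos_of_nonneg (hx i) ha
  have hsuper := Real.geom_mean_add_geom_mean_le_weighted univ _ hw hw'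
    (fun i _ => (hx i).le) (fun _ _ => ha) fun i _ => hxa i
  rw [Real.geom_mean_weighted_of_constant univ _ _ a hw hw' (fun _ _ => ha) fun _ _ _ => rfl,
    Real.finsetProd_rpow _ _ fun i _ => (hx i).le,
    Real.finsetProd_rpow _ _ fun i _ => (hxa i).le] at hsuper
  linarith
end

section
/- The shifted geometric mean with shift a of positive reals x₁,…,xₙ is at most their arithmetic mean, and as a → ∞ the shifted geometric mean tends to the arithmetic mean. -/
/-! The inequality is AM-GM applied to the numbers `xᵢ + a`. For the limit, factor `a` out:
with `h u = (∏ i, (1 + xᵢ u)) ^ (1 / n)` the shifted geometric mean equals `a (h a⁻¹ - h 0)`,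
a difference quotient of `h` at `0`, so it tends to `h' 0 = (1 / n) ∑ i, xᵢ`. -/

open Finset Filter Topology

variable {ι : Type*} [Fintype ι]

noncomputable def shiftedGeomMean (x : ι → ℝ) (a : ℝ) : ℝ :=
  (∏ i, (x i + a)) ^ ((1 : ℝ) / Fintype.card ι) - a

noncomputable def arithMean (x : ι → ℝ) : ℝ :=
  (1 / Fintype.card ι) * ∑ i, x i

theorem geomMean_le_arithMean [Nonempty ι] {z : ι → ℝ} (hz : ∀ i, 0 ≤ z i) :
    (∏ i, z i) ^ ((1 : ℝ) / Fintype.card ι) ≤ arithMean z := by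
  simpa [arithMean, one_div, div_eq_inv_mul] using
    Real.geom_mean_le_arith_mean univ 1 z (fun _ _ => zero_le_one)
      (by simpa using Fintype.card_pos) (fun i _ => hz i)

theorem arithMean_add_const [Nonempty ι] (x : ι → ℝ) (a : ℝ) :
    arithMean (fun i => x i + a) = arithMean x + a := by
  simp only [arithMean, one_div, sum_add_distrib, sum_const, card_univ, nsmul_eq_mul]
  field_simp

theorem shiftedGeomMean_le_arithMean [Nonempty ι] {x : ι → ℝ} {a : ℝ}
    (hx : ∀ i, 0 ≤ x i + a) : shiftedGeomMean x a ≤ arithMean x := by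
  have hamgm := geomMean_le_arithMean hx
  rw [arithMean_add_const] at hamgm
  rw [shiftedGeomMean]
  linarith

theorem hasDerivAt_prod_one_add_mul (x : ι → ℝ) :
    HasDerivAt (fun u : ℝ => ∏ i, (1 + x i * u)) (∑ i, x i) 0 := by
  classical
  simpa using HasDerivAt.fun_finsetProd (u := univ) (x := 0)
    fun i _ => ((hasDerivAt_id (0 : ℝ)).const_mul (x i)).const_add 1

theorem hasDerivAt_prod_one_add_mul_rpow (x : ι → ℝ) (p : ℝ) :
    HasDerivAt (fun u : ℝ => (∏ i, (1 + x i * u)) ^ p) (p * ∑ i, x i) 0 := by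
  simpa [mul_comm] using (hasDerivAt_prod_one_add_mul x).rpow_const (p := p) (by simp)

theorem tendsto_mul_sub_of_hasDerivAt_zero {h : ℝ → ℝ} {d : ℝ} (hd : HasDerivAt h d 0) :
    Tendsto (fun a : ℝ => a * (h a⁻¹ - h 0)) atTop (𝓝 d) := by
  have hslope := (hasDerivAt_iff_tendsto_slope.mp hd).comp <|
    tendsto_inv_atTop_nhdsGT_zero.mono_right (nhdsWithin_mono _ fun y hy => (Set.mem_Ioi.mp hy).ne')
  refine hslope.congr fun a => ?_
  simp only [Function.comp_apply, slope_def_field, sub_zero, div_eq_mul_inv, inv_inv]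
  ring

theorem prod_add_rpow_eq_mul_rpow [Nonempty ι] {x : ι → ℝ} {a : ℝ} (ha : 0 < a)
    (hx : ∀ i, 0 ≤ x i + a) :
    (∏ i, (x i + a)) ^ ((1 : ℝ) / Fintype.card ι) =
      a * (∏ i, (1 + x i * a⁻¹)) ^ ((1 : ℝ) / Fintype.card ι) := by
  have hfactor : ∏ i, (x i + a) = a ^ Fintype.card ι * ∏ i, (1 + x i * a⁻¹) := by
    rw [← card_univ, ← prod_const, ← prod_mul_distrib]
    refine prod_congr rfl fun i _ => ?_
    field_simp
    ring
  have hnonneg : 0 ≤ ∏ i, (1 + x i * a⁻¹) := by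
    refine prod_nonneg fun i _ => ?_
    have := hx i
    rw [show 1 + x i * a⁻¹ = (x i + a) * a⁻¹ by field_simp; ring]
    positivity
  rw [hfactor, Real.mul_rpow (by positivity) hnonneg, one_div,
    Real.pow_rpow_inv_natCast ha.le Fintype.card_ne_zero]

theorem tendsto_shiftedGeomMean_atTop [Nonempty ι] (x : ι → ℝ) :
    Tendsto (shiftedGeomMean x) atTop (𝓝 (arithMean x)) := by
  have hquot := tendsto_mul_sub_of_hasDerivAt_zero
    (hasDerivAt_prod_one_add_mul_rpow x ((1 : ℝ) / Fintype.card ι))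
  simp only [mul_zero, add_zero, prod_const_one, Real.one_rpow] at hquot
  refine hquot.congr' ?_
  filter_upwards [eventually_gt_atTop 0, eventually_all.2 fun i => eventually_ge_atTop (-x i)]
    with a ha hxa
  rw [shiftedGeomMean, prod_add_rpow_eq_mul_rpow ha fun i => by linarith [hxa i]]
  ring

theorem shiftedGeomMean_le_arithMean_and_tendsto (n : ℕ) (hn : 0 < n)
    (x : Fin n → ℝ) (hx : ∀ i, 0 < x i) :
    (∀ a : ℝ, 0 ≤ a →
      (∏ i, (x i + a)) ^ ((1 : ℝ) / n) - a ≤ (1 / n) * ∑ i, x i) ∧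
    Tendsto (fun a : ℝ => (∏ i, (x i + a)) ^ ((1 : ℝ) / n) - a) atTop
      (nhds ((1 / n) * ∑ i, x i)) := by
  have : Nonempty (Fin n) := ⟨⟨0, hn⟩⟩
  have hle (a : ℝ) (ha : 0 ≤ a) : shiftedGeomMean x a ≤ arithMean x :=
    shiftedGeomMean_le_arithMean fun i => by linarith [hx i]
  have hlim := tendsto_shiftedGeomMean_atTop x
  unfold shiftedGeomMean arithMean at hle hlim
  simpa only [Fintype.card_fin] using And.intro hle hlim
end
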